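/- For the 4-letter CGR on the square with corners (±1,±1), the map from sequences of a fixed length n to their final CGR coordinate pₙ is injective: distinct sequences of the same length yield distinct final points. -/
import Mathlib


inductive Nucleotide : Type
  | A | T | G | C
deriving DecidableEq

/-- Corner points at the four corners of the square `(±1, ±1)`. -/
def dnaCorner : Nucleotide → ℚ × ℚ
  | Nucleotide.A => (1, 1)
  | Nucleotide.T => (-1, 1)
  | Nucleotide.G => (-1, -1)
  | Nucleotide.C => (1, -1)

/-- One CGR step: midpoint of the current point and the corner point. -/
def cgrStep (p c : ℚ × ℚ) : ℚ × ℚ := ((p.1 + c.1) / 2, (p.2 + c.2) / 2)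

/-- The final CGR point after processing a sequence from start point `p`. -/
def cgrRun : ℚ × ℚ → List Nucleotide → ℚ × ℚ
  | p, [] => p
  | p, s :: t => cgrRun (cgrStep p (dnaCorner s)) t

lemma cgrRun_bound (S : List Nucleotide) : ∀ p : ℚ × ℚ,
    -1 < p.1 → p.1 < 1 → -1 < p.2 → p.2 < 1 →
    (-1 < (cgrRun p S).1 ∧ (cgrRun p S).1 < 1 ∧
     -1 < (cgrRun p S).2 ∧ (cgrRun p S).2 < 1) := by
  induction S with
  | nil => intro p h1 h2 h3 h4; exact ⟨h1, h2, h3, h4⟩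
  | cons a t ih =>
    intro p h1 h2 h3 h4
    apply ih
    all_goals cases a <;> simp [cgrStep, dnaCorner] <;> linarith

lemma cgrRun_append (l : List Nucleotide) (a : Nucleotide) : ∀ p : ℚ × ℚ,
    cgrRun p (l ++ [a]) = cgrStep (cgrRun p l) (dnaCorner a) := by
  induction l with
  | nil => intro p; rfl
  | cons b t ih => intro p; simp only [List.cons_append, cgrRun]; exact ih _

lemma step_inj (a b : Nucleotide) (p q : ℚ × ℚ)
    (hp1 : -1 < p.1) (hp2 : p.1 < 1) (hp3 : -1 < p.2) (hp4 : p.2 < 1)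
    (hq1 : -1 < q.1) (hq2 : q.1 < 1) (hq3 : -1 < q.2) (hq4 : q.2 < 1)
    (h : cgrStep p (dnaCorner a) = cgrStep q (dnaCorner b)) :
    a = b ∧ p = q := by
  rw [Prod.ext_iff] at h
  obtain ⟨h1, h2⟩ := h
  cases a <;> cases b <;>
    simp_all [cgrStep, dnaCorner, Prod.ext_iff] <;>
    first
      | (constructor <;> linarith)
      | linarith

/-- distinct DNA sequences of the same length have distinct final CGR points. -/
theorem cgr_final_injective_fixed_length (S T : List Nucleotide)
    (hlen : S.length = T.length) (hfinal : cgrRun (0, 0) S = cgrRun (0, 0) T) :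
    S = T := by
  induction S using List.reverseRecOn generalizing T with
  | nil =>
    have : T = [] := List.eq_nil_of_length_eq_zero hlen.symm
    simp [this]
  | append_singleton l a ih =>
    rcases T.eq_nil_or_concat with rfl | ⟨l', b, rfl⟩
    · simp at hlen
    · rw [List.concat_eq_append] at hlen hfinal ⊢
      rw [cgrRun_append, cgrRun_append] at hfinal
      have hp := cgrRun_bound l (0,0) (by norm_num) (by norm_num) (by norm_num) (by norm_num)
      have hq := cgrRun_bound l' (0,0) (by norm_num) (by norm_num) (by norm_num) (by norm_num)
      obtain ⟨hab, hpq⟩ := step_inj a b _ _ hp.1 hp.2.1 hp.2.2.1 hp.2.2.2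
        hq.1 hq.2.1 hq.2.2.1 hq.2.2.2 hfinal
      simp only [List.length_append, List.length_singleton] at hlen
      have := ih l' (by omega) hpq
      rw [this, hab]
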